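/- Let d ≥ 1 be an integer, β ≥ 0, and π ∈ [0,1]. Let P and ν be probability measures on ℝ^d, both supported on the unit sphere {z : ‖z‖ = 1}, and suppose ν satisfies: for every unit vector x ∈ ℝ^d, ∫ exp(β·⟨x,u⟩) dν(u) ≤ exp(β²/(2d)). Let Z and Z' be independent random vectors each distributed according to the mixture Q = π·P + (1-π)·ν. Then E[exp(β·⟨Z,Z'⟩)] ≤ π²·exp(β) + (1-π²)·exp(β²/(2d)). Consequently φ(β) := log E[exp(β·⟨Z,Z'⟩)] ≤ log( (1-π²)·e^{β²/(2d)} + π²·e^{β} ) = β²/(2d) + log(1 - π² + π²·e^{β - β²/(2d)}). -/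

import Mathlib

open MeasureTheory ProbabilityTheory
open scoped RealInnerProductSpace

section Aux

variable {d : ℕ}

private lemma cont_g (β : ℝ) :
    Continuous (fun zz : (EuclideanSpace ℝ (Fin d)) × (EuclideanSpace ℝ (Fin d)) =>
      Real.exp (β * ⟪zz.1, zz.2⟫)) :=
  Real.continuous_exp.comp (continuous_const.mul continuous_inner)

private lemma integ_one (β : ℝ) (μ : Measure (EuclideanSpace ℝ (Fin d))) [IsProbabilityMeasure μ]
    (hμ : ∀ᵐ z ∂μ, ‖z‖ = 1) (z : EuclideanSpace ℝ (Fin d)) :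
    Integrable (fun z' => Real.exp (β * ⟪z, z'⟫)) μ := by
  refine ⟨(Real.continuous_exp.comp
      (continuous_const.mul (continuous_const.inner continuous_id))).aestronglyMeasurable,
    HasFiniteIntegral.of_bounded (C := Real.exp (|β| * ‖z‖)) ?_⟩
  filter_upwards [hμ] with z' hz'
  rw [Real.norm_eq_abs, abs_of_pos (Real.exp_pos _)]
  apply Real.exp_le_exp.2
  calc β * ⟪z, z'⟫ ≤ |β * ⟪z, z'⟫| := le_abs_self _
    _ = |β| * |⟪z, z'⟫| := abs_mul _ _
    _ ≤ |β| * (‖z‖ * ‖z'‖) := by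
        exact mul_le_mul_of_nonneg_left (abs_real_inner_le_norm z z') (abs_nonneg _)
    _ = |β| * ‖z‖ := by rw [hz', mul_one]

private lemma inner_int_nonneg (β : ℝ) (μ : Measure (EuclideanSpace ℝ (Fin d)))
    (z : EuclideanSpace ℝ (Fin d)) :
    0 ≤ ∫ z', Real.exp (β * ⟪z, z'⟫) ∂μ :=
  integral_nonneg fun _ => (Real.exp_pos _).le

private lemma inner_int_bound (β : ℝ) (μ : Measure (EuclideanSpace ℝ (Fin d)))
    [IsProbabilityMeasure μ] (hμ : ∀ᵐ z ∂μ, ‖z‖ = 1) (z : EuclideanSpace ℝ (Fin d)) :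
    ∫ z', Real.exp (β * ⟪z, z'⟫) ∂μ ≤ Real.exp (|β| * ‖z‖) := by
  have h := integral_mono_ae (integ_one β μ hμ z)
    (integrable_const (Real.exp (|β| * ‖z‖))) ?_
  · simpa using h
  · filter_upwards [hμ] with z' hz'
    apply Real.exp_le_exp.2
    calc β * ⟪z, z'⟫ ≤ |β * ⟪z, z'⟫| := le_abs_self _
      _ = |β| * |⟪z, z'⟫| := abs_mul _ _
      _ ≤ |β| * (‖z‖ * ‖z'‖) :=
          mul_le_mul_of_nonneg_left (abs_real_inner_le_norm z z') (abs_nonneg _)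
      _ = |β| * ‖z‖ := by rw [hz', mul_one]

private lemma inner_le_expβ (β : ℝ) (hβ : 0 ≤ β) (μ : Measure (EuclideanSpace ℝ (Fin d)))
    [IsProbabilityMeasure μ] (hμ : ∀ᵐ z ∂μ, ‖z‖ = 1) (z : EuclideanSpace ℝ (Fin d))
    (hz : ‖z‖ = 1) :
    ∫ z', Real.exp (β * ⟪z, z'⟫) ∂μ ≤ Real.exp β := by
  have h := integral_mono_ae (integ_one β μ hμ z) (integrable_const (Real.exp β)) ?_
  · simpa using h
  · filter_upwards [hμ] with z' hz'
    apply Real.exp_le_exp.2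
    have ht : ⟪z, z'⟫ ≤ 1 := by
      have := real_inner_le_norm z z'
      rw [hz, hz', mul_one] at this
      exact this
    exact mul_le_of_le_one_right hβ ht

private lemma integ_prod (β : ℝ) (μ μ' : Measure (EuclideanSpace ℝ (Fin d)))
    [IsProbabilityMeasure μ] [IsProbabilityMeasure μ']
    (hμ : ∀ᵐ z ∂μ, ‖z‖ = 1) (hμ' : ∀ᵐ z ∂μ', ‖z‖ = 1) :
    Integrable (fun zz : (EuclideanSpace ℝ (Fin d)) × (EuclideanSpace ℝ (Fin d)) =>
      Real.exp (β * ⟪zz.1, zz.2⟫)) (μ.prod μ') := by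
  refine ⟨(cont_g β).aestronglyMeasurable,
    HasFiniteIntegral.of_bounded (C := Real.exp |β|) ?_⟩
  have hmeas : MeasurableSet {x : (EuclideanSpace ℝ (Fin d)) × (EuclideanSpace ℝ (Fin d)) |
      ‖x.1‖ = 1 ∧ ‖x.2‖ = 1} :=
    (measurable_fst.norm (measurableSet_singleton 1)).inter
      (measurable_snd.norm (measurableSet_singleton 1))
  have hae : ∀ᵐ zz ∂μ.prod μ', ‖zz.1‖ = 1 ∧ ‖zz.2‖ = 1 := by
    rw [Measure.ae_prod_iff_ae_ae hmeas]
    filter_upwards [hμ] with x hx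
    filter_upwards [hμ'] with y hy
    exact ⟨hx, hy⟩
  filter_upwards [hae] with zz hzz
  rw [Real.norm_eq_abs, abs_of_pos (Real.exp_pos _)]
  apply Real.exp_le_exp.2
  calc β * ⟪zz.1, zz.2⟫ ≤ |β * ⟪zz.1, zz.2⟫| := le_abs_self _
    _ = |β| * |⟪zz.1, zz.2⟫| := abs_mul _ _
    _ ≤ |β| * (‖zz.1‖ * ‖zz.2‖) :=
        mul_le_mul_of_nonneg_left (abs_real_inner_le_norm _ _) (abs_nonneg _)
    _ = |β| := by rw [hzz.1, hzz.2]; ring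

private lemma integ_outer (β : ℝ) (μ μ' : Measure (EuclideanSpace ℝ (Fin d)))
    [IsProbabilityMeasure μ] [IsProbabilityMeasure μ']
    (hμ : ∀ᵐ z ∂μ, ‖z‖ = 1) (hμ' : ∀ᵐ z ∂μ', ‖z‖ = 1) :
    Integrable (fun z => ∫ z', Real.exp (β * ⟪z, z'⟫) ∂μ') μ := by
  have hsm : StronglyMeasurable (fun z => ∫ z', Real.exp (β * ⟪z, z'⟫) ∂μ') := by
    apply StronglyMeasurable.integral_prod_right (f := fun z z' => Real.exp (β * ⟪z, z'⟫))
    exact (cont_g β).stronglyMeasurable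
  refine ⟨hsm.aestronglyMeasurable, HasFiniteIntegral.of_bounded (C := Real.exp |β|) ?_⟩
  filter_upwards [hμ] with z hz
  rw [Real.norm_eq_abs, abs_of_nonneg (inner_int_nonneg β μ' z)]
  calc ∫ z', Real.exp (β * ⟪z, z'⟫) ∂μ' ≤ Real.exp (|β| * ‖z‖) := inner_int_bound β μ' hμ' z
    _ = Real.exp |β| := by rw [hz, mul_one]

end Aux

/-- π-sensitivity of the log-mean-exp functional under a mixture: if `Z, Z'` are
independent with common law the mixture `Q = p • P + (1-p) • ν`, where `P, ν` are
supported on the unit sphere of `ℝ^d` and `ν` satisfies the sub-Gaussian mgf bound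
`∫ exp (β ⟪x, u⟫) dν(u) ≤ exp (β²/(2d))` for every unit vector `x`, then
`E[exp (β ⟪Z, Z'⟫)] ≤ p² e^β + (1 - p²) e^{β²/(2d)}` and hence
`φ(β) = log E[exp (β ⟪Z, Z'⟫)] ≤ β²/(2d) + log (1 - p² + p² e^{β - β²/(2d)})`. -/
theorem mixture_lme_pi_sensitivity (d : ℕ) (hd : 1 ≤ d) (β : ℝ) (hβ : 0 ≤ β)
    (p : ℝ) (hp0 : 0 ≤ p) (hp1 : p ≤ 1)
    (P ν : Measure (EuclideanSpace ℝ (Fin d)))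
    [IsProbabilityMeasure P] [IsProbabilityMeasure ν]
    (hPs : ∀ᵐ z ∂P, ‖z‖ = 1) (hνs : ∀ᵐ z ∂ν, ‖z‖ = 1)
    (hνmgf : ∀ x : EuclideanSpace ℝ (Fin d), ‖x‖ = 1 →
      ∫ u, Real.exp (β * ⟪x, u⟫) ∂ν ≤ Real.exp (β ^ 2 / (2 * d)))
    {Ω : Type*} [MeasurableSpace Ω] (P₀ : Measure Ω) [IsProbabilityMeasure P₀]
    (Z Z' : Ω → EuclideanSpace ℝ (Fin d)) (hZ : Measurable Z) (hZ' : Measurable Z')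
    (hindep : IndepFun Z Z' P₀)
    (hZlaw : Measure.map Z P₀ = ENNReal.ofReal p • P + ENNReal.ofReal (1 - p) • ν)
    (hZ'law : Measure.map Z' P₀ = ENNReal.ofReal p • P + ENNReal.ofReal (1 - p) • ν) :
    (∫ ω, Real.exp (β * ⟪Z ω, Z' ω⟫) ∂P₀ ≤
      p ^ 2 * Real.exp β + (1 - p ^ 2) * Real.exp (β ^ 2 / (2 * d))) ∧
    Real.log (∫ ω, Real.exp (β * ⟪Z ω, Z' ω⟫) ∂P₀) ≤
      β ^ 2 / (2 * d) + Real.log (1 - p ^ 2 + p ^ 2 * Real.exp (β - β ^ 2 / (2 * d))) := by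
  classical
  have h1p : (0:ℝ) ≤ 1 - p := by linarith
  set s : ℝ := β ^ 2 / (2 * d) with hsdef
  haveI hprob : IsProbabilityMeasure
      (ENNReal.ofReal p • P + ENNReal.ofReal (1 - p) • ν) :=
    hZlaw ▸ Measure.isProbabilityMeasure_map hZ.aemeasurable
  have hQs : ∀ᵐ z ∂(ENNReal.ofReal p • P + ENNReal.ofReal (1 - p) • ν), ‖z‖ = 1 := by
    rw [ae_add_measure_iff]
    exact ⟨Measure.ae_smul_measure hPs _, Measure.ae_smul_measure hνs _⟩
  have hpair : Measure.map (fun ω => (Z ω, Z' ω)) P₀ =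
      (ENNReal.ofReal p • P + ENNReal.ofReal (1 - p) • ν).prod
        (ENNReal.ofReal p • P + ENNReal.ofReal (1 - p) • ν) := by
    rw [(indepFun_iff_map_prod_eq_prod_map_map hZ.aemeasurable hZ'.aemeasurable).mp hindep,
      hZlaw, hZ'law]
  have hint_eq : ∫ ω, Real.exp (β * ⟪Z ω, Z' ω⟫) ∂P₀
      = ∫ zz, Real.exp (β * ⟪zz.1, zz.2⟫)
          ∂((ENNReal.ofReal p • P + ENNReal.ofReal (1 - p) • ν).prod
            (ENNReal.ofReal p • P + ENNReal.ofReal (1 - p) • ν)) := by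
    rw [← hpair,
      integral_map (hZ.prodMk hZ').aemeasurable (cont_g β).aestronglyMeasurable]
  have hfub : ∫ ω, Real.exp (β * ⟪Z ω, Z' ω⟫) ∂P₀
      = ∫ z, ∫ z', Real.exp (β * ⟪z, z'⟫)
          ∂(ENNReal.ofReal p • P + ENNReal.ofReal (1 - p) • ν)
          ∂(ENNReal.ofReal p • P + ENNReal.ofReal (1 - p) • ν) := by
    rw [hint_eq]
    exact integral_prod _ (integ_prod β _ _ hQs hQs)
  have hpne : ENNReal.ofReal p ≠ ⊤ := ENNReal.ofReal_ne_top
  have h1pne : ENNReal.ofReal (1 - p) ≠ ⊤ := ENNReal.ofReal_ne_top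
  have hsplit : ∀ F : EuclideanSpace ℝ (Fin d) → ℝ, Integrable F P → Integrable F ν →
      ∫ z, F z ∂(ENNReal.ofReal p • P + ENNReal.ofReal (1 - p) • ν)
        = p * ∫ z, F z ∂P + (1 - p) * ∫ z, F z ∂ν := by
    intro F h1 h2
    rw [integral_add_measure (h1.smul_measure hpne) (h2.smul_measure h1pne),
      integral_smul_measure, integral_smul_measure, ENNReal.toReal_ofReal hp0,
      ENNReal.toReal_ofReal h1p, smul_eq_mul, smul_eq_mul]
  have hinner : (fun z => ∫ z', Real.exp (β * ⟪z, z'⟫)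
        ∂(ENNReal.ofReal p • P + ENNReal.ofReal (1 - p) • ν))
      = fun z => p * (∫ z', Real.exp (β * ⟪z, z'⟫) ∂P)
          + (1 - p) * ∫ z', Real.exp (β * ⟪z, z'⟫) ∂ν :=
    funext fun z => hsplit _ (integ_one β P hPs z) (integ_one β ν hνs z)
  have hfPP : Integrable (fun z => ∫ z', Real.exp (β * ⟪z, z'⟫) ∂P) P :=
    integ_outer β P P hPs hPs
  have hfνP : Integrable (fun z => ∫ z', Real.exp (β * ⟪z, z'⟫) ∂ν) P :=
    integ_outer β P ν hPs hνs
  have hfPν : Integrable (fun z => ∫ z', Real.exp (β * ⟪z, z'⟫) ∂P) ν :=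
    integ_outer β ν P hνs hPs
  have hfνν : Integrable (fun z => ∫ z', Real.exp (β * ⟪z, z'⟫) ∂ν) ν :=
    integ_outer β ν ν hνs hνs
  have hIP : Integrable (fun z => p * (∫ z', Real.exp (β * ⟪z, z'⟫) ∂P)
      + (1 - p) * ∫ z', Real.exp (β * ⟪z, z'⟫) ∂ν) P :=
    (hfPP.const_mul p).add (hfνP.const_mul (1 - p))
  have hIν : Integrable (fun z => p * (∫ z', Real.exp (β * ⟪z, z'⟫) ∂P)
      + (1 - p) * ∫ z', Real.exp (β * ⟪z, z'⟫) ∂ν) ν :=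
    (hfPν.const_mul p).add (hfνν.const_mul (1 - p))
  set A : ℝ := ∫ z, (∫ z', Real.exp (β * ⟪z, z'⟫) ∂P) ∂P with hA
  set B : ℝ := ∫ z, (∫ z', Real.exp (β * ⟪z, z'⟫) ∂ν) ∂P with hB
  set C : ℝ := ∫ z, (∫ z', Real.exp (β * ⟪z, z'⟫) ∂P) ∂ν with hC
  set D : ℝ := ∫ z, (∫ z', Real.exp (β * ⟪z, z'⟫) ∂ν) ∂ν with hD
  have hIform : ∫ ω, Real.exp (β * ⟪Z ω, Z' ω⟫) ∂P₀
      = p * (p * A + (1 - p) * B) + (1 - p) * (p * C + (1 - p) * D) := by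
    rw [hfub, hinner, hsplit _ hIP hIν,
      integral_add (hfPP.const_mul p) (hfνP.const_mul (1 - p)),
      integral_add (hfPν.const_mul p) (hfνν.const_mul (1 - p)),
      integral_const_mul, integral_const_mul, integral_const_mul, integral_const_mul]
  -- bounds
  have hAle : A ≤ Real.exp β := by
    have h := integral_mono_ae hfPP (integrable_const (Real.exp β)) ?_
    · rw [hA]; simpa using h
    · filter_upwards [hPs] with z hz
      exact inner_le_expβ β hβ P hPs z hz
  have hBle : B ≤ Real.exp s := by
    have h := integral_mono_ae hfνP (integrable_const (Real.exp s)) ?_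
    · rw [hB]; simpa using h
    · filter_upwards [hPs] with z hz
      exact hνmgf z hz
  have hDle : D ≤ Real.exp s := by
    have h := integral_mono_ae hfνν (integrable_const (Real.exp s)) ?_
    · rw [hD]; simpa using h
    · filter_upwards [hνs] with z hz
      exact hνmgf z hz
  have hCB : C = B := by
    rw [hC, hB]
    rw [integral_integral_swap (f := fun z z' => Real.exp (β * ⟪z, z'⟫))
      (integ_prod β ν P hνs hPs)]
    refine integral_congr_ae (Filter.Eventually.of_forall fun y => ?_)
    refine integral_congr_ae (Filter.Eventually.of_forall fun x => ?_)
    simp only [real_inner_comm x y]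
  have hfirst : ∫ ω, Real.exp (β * ⟪Z ω, Z' ω⟫) ∂P₀
      ≤ p ^ 2 * Real.exp β + (1 - p ^ 2) * Real.exp s := by
    rw [hCB] at hIform
    have c1 : (0:ℝ) ≤ p * p := mul_nonneg hp0 hp0
    have c2 : (0:ℝ) ≤ p * (1 - p) := mul_nonneg hp0 h1p
    have c2' : (0:ℝ) ≤ (1 - p) * p := mul_nonneg h1p hp0
    have c3 : (0:ℝ) ≤ (1 - p) * (1 - p) := mul_nonneg h1p h1p
    calc ∫ ω, Real.exp (β * ⟪Z ω, Z' ω⟫) ∂P₀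
        = p * p * A + p * (1 - p) * B + (1 - p) * p * B + (1 - p) * (1 - p) * D := by
          rw [hIform]; ring
      _ ≤ p * p * Real.exp β + p * (1 - p) * Real.exp s + (1 - p) * p * Real.exp s
            + (1 - p) * (1 - p) * Real.exp s := by
          exact add_le_add (add_le_add (add_le_add
            (mul_le_mul_of_nonneg_left hAle c1) (mul_le_mul_of_nonneg_left hBle c2))
            (mul_le_mul_of_nonneg_left hBle c2')) (mul_le_mul_of_nonneg_left hDle c3)
      _ = p ^ 2 * Real.exp β + (1 - p ^ 2) * Real.exp s := by ring
  refine ⟨hfirst, ?_⟩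
  -- positivity of the integral
  have hms : MeasurableSet {z : EuclideanSpace ℝ (Fin d) | ‖z‖ = 1} :=
    measurable_norm (measurableSet_singleton 1)
  have hZsph : ∀ᵐ ω ∂P₀, ‖Z ω‖ = 1 :=
    (ae_map_iff hZ.aemeasurable hms).mp (hZlaw ▸ hQs)
  have hZ'sph : ∀ᵐ ω ∂P₀, ‖Z' ω‖ = 1 :=
    (ae_map_iff hZ'.aemeasurable hms).mp (hZ'law ▸ hQs)
  have hIint : Integrable (fun ω => Real.exp (β * ⟪Z ω, Z' ω⟫)) P₀ := by
    refine ⟨((cont_g β).measurable.comp (hZ.prodMk hZ')).aestronglyMeasurable,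
      HasFiniteIntegral.of_bounded (C := Real.exp β) ?_⟩
    filter_upwards [hZsph, hZ'sph] with ω h1 h2
    rw [Real.norm_eq_abs, abs_of_pos (Real.exp_pos _)]
    apply Real.exp_le_exp.2
    have ht : ⟪Z ω, Z' ω⟫ ≤ 1 := by
      have := real_inner_le_norm (Z ω) (Z' ω)
      rw [h1, h2, mul_one] at this
      exact this
    exact mul_le_of_le_one_right hβ ht
  have hIpos : 0 < ∫ ω, Real.exp (β * ⟪Z ω, Z' ω⟫) ∂P₀ := by
    have hlow : ∀ᵐ ω ∂P₀, Real.exp (-β) ≤ Real.exp (β * ⟪Z ω, Z' ω⟫) := by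
      filter_upwards [hZsph, hZ'sph] with ω h1 h2
      apply Real.exp_le_exp.2
      have ht : -1 ≤ ⟪Z ω, Z' ω⟫ := by
        have := abs_real_inner_le_norm (Z ω) (Z' ω)
        rw [h1, h2, mul_one] at this
        linarith [neg_abs_le (⟪Z ω, Z' ω⟫ : ℝ)]
      nlinarith
    have h := integral_mono_ae (integrable_const (Real.exp (-β))) hIint hlow
    simp only [integral_const, probReal_univ, measure_univ, ENNReal.toReal_one, one_smul] at h
    exact lt_of_lt_of_le (Real.exp_pos _) h
  -- log step
  have hp2 : p ^ 2 ≤ 1 := by nlinarith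
  have hRpos : 0 < 1 - p ^ 2 + p ^ 2 * Real.exp (β - s) := by
    rcases le_total 1 (Real.exp (β - s)) with h | h
    · have := mul_le_mul_of_nonneg_left h (sq_nonneg p)
      linarith
    · have h2 := mul_nonneg (by linarith : (0:ℝ) ≤ 1 - p ^ 2)
        (by linarith : (0:ℝ) ≤ 1 - Real.exp (β - s))
      nlinarith [Real.exp_pos (β - s)]
  have hEE : Real.exp s * Real.exp (β - s) = Real.exp β := by
    rw [← Real.exp_add]; ring_nf
  have hRHS : p ^ 2 * Real.exp β + (1 - p ^ 2) * Real.exp s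
      = Real.exp s * (1 - p ^ 2 + p ^ 2 * Real.exp (β - s)) := by
    linear_combination (-(p ^ 2)) * hEE
  have hlog : Real.log (∫ ω, Real.exp (β * ⟪Z ω, Z' ω⟫) ∂P₀)
      ≤ Real.log (Real.exp s * (1 - p ^ 2 + p ^ 2 * Real.exp (β - s))) := by
    apply Real.log_le_log hIpos
    rw [← hRHS]; exact hfirst
  calc Real.log (∫ ω, Real.exp (β * ⟪Z ω, Z' ω⟫) ∂P₀)
      ≤ Real.log (Real.exp s * (1 - p ^ 2 + p ^ 2 * Real.exp (β - s))) := hlog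
    _ = s + Real.log (1 - p ^ 2 + p ^ 2 * Real.exp (β - s)) := by
        rw [Real.log_mul (Real.exp_pos s).ne' hRpos.ne', Real.log_exp]
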